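/- arXiv:1109.4173 — 6 statements merged into one kernel-verified Lean document; each statement's English description precedes it below -/
import Mathlib

section
/- Let Z be a set of complex numbers that is closed under multiplication by i, by −1, and by −i, and such that no element of Z is real or purely imaginary (in particular 0 ∉ Z, and for every real r, neither r nor r·i belongs to Z). Set X = {1, i} and Y = {z ∈ Z : Re z > 0 and Im z > 0} ∪ {z ∈ Z : Re z < 0 and Im z < 0}. Then (X, Y) is a uniquely factorable constellation pair and {y/x : x ∈ X, y ∈ Y} = Z. -/
/-- A pair `(X, Y)` of sets of complex numbers is a uniquely factorable
constellation pair (UFCP) if `x * y' = x' * y` with `x, x' ∈ X` and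
`y, y' ∈ Y` implies `x = x'` and `y = y'`. -/
def IsUFCP (X Y : Set ℂ) : Prop :=
  ∀ x ∈ X, ∀ x' ∈ X, ∀ y ∈ Y, ∀ y' ∈ Y, x * y' = x' * y → x = x' ∧ y = y'

/-- If `Z ⊆ ℂ` is closed under multiplication by `i`, `-1` and `-i`, and
contains no real and no purely imaginary number, then with `X = {1, i}` and
`Y` the points of `Z` in the open first quadrant together with those in the
open third quadrant, `(X, Y)` is a UFCP and `{y/x : x ∈ X, y ∈ Y} = Z`. -/
theorem ufcp_of_rotation_invariant_two (Z : Set ℂ)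
    (hI : ∀ z ∈ Z, z * Complex.I ∈ Z)
    (hneg : ∀ z ∈ Z, z * (-1) ∈ Z)
    (hnegI : ∀ z ∈ Z, z * (-Complex.I) ∈ Z)
    (hreal : ∀ r : ℝ, (r : ℂ) ∉ Z ∧ (r : ℂ) * Complex.I ∉ Z) :
    IsUFCP ({1, Complex.I} : Set ℂ)
        ({z ∈ Z | 0 < z.re ∧ 0 < z.im} ∪ {z ∈ Z | z.re < 0 ∧ z.im < 0}) ∧
      {w : ℂ | ∃ x ∈ ({1, Complex.I} : Set ℂ),
          ∃ y ∈ ({z ∈ Z | 0 < z.re ∧ 0 < z.im} ∪ {z ∈ Z | z.re < 0 ∧ z.im < 0}),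
          w = y / x} = Z := by
  have him : ∀ z ∈ Z, z.im ≠ 0 := by
    intro z hz h
    have hzr : z = (z.re : ℂ) := by
      apply Complex.ext <;> simp [h]
    exact (hreal z.re).1 (hzr ▸ hz)
  have hre : ∀ z ∈ Z, z.re ≠ 0 := by
    intro z hz h
    have hzi : z = (z.im : ℂ) * Complex.I := by
      apply Complex.ext <;> simp [h]
    exact (hreal z.im).2 (hzi ▸ hz)
  constructor
  · intro x hx x' hx' y hy y' hy' heq
    rcases hx with rfl | rfl <;> rcases hx' with rfl | rfl
    · simp only [one_mul] at heq; exact ⟨rfl, heq.symm⟩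
    · exfalso
      rw [one_mul] at heq
      rcases hy with ⟨_, hy1, hy2⟩ | ⟨_, hy1, hy2⟩ <;>
        rcases hy' with ⟨_, h1, h2⟩ | ⟨_, h1, h2⟩ <;>
        rw [heq] at h1 h2 <;>
        simp [Complex.mul_re, Complex.mul_im] at h1 h2 <;> linarith
    · exfalso
      rw [one_mul] at heq
      rcases hy' with ⟨_, hy1, hy2⟩ | ⟨_, hy1, hy2⟩ <;>
        rcases hy with ⟨_, h1, h2⟩ | ⟨_, h1, h2⟩ <;>
        rw [← heq] at h1 h2 <;>
        simp [Complex.mul_re, Complex.mul_im] at h1 h2 <;> linarith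
    · exact ⟨rfl, (mul_left_cancel₀ Complex.I_ne_zero heq).symm⟩
  · ext z
    constructor
    · rintro ⟨x, hx, y, hy, rfl⟩
      have hyZ : y ∈ Z := by rcases hy with ⟨h, _⟩ | ⟨h, _⟩ <;> exact h
      rcases hx with rfl | rfl
      · simpa using hyZ
      · have hdiv : y / Complex.I = y * (-Complex.I) := by
          rw [div_eq_iff Complex.I_ne_zero]
          ring_nf
          simp [Complex.I_sq]
        rw [hdiv]; exact hnegI y hyZ
    · intro hz
      have h1 := hre z hz
      have h2 := him z hz
      have hzI : (z * Complex.I).re = -z.im ∧ (z * Complex.I).im = z.re := by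
        constructor <;> simp [Complex.mul_re, Complex.mul_im]
      have hdivI : z = (z * Complex.I) / Complex.I :=
        (mul_div_cancel_right₀ z Complex.I_ne_zero).symm
      rcases lt_or_gt_of_ne h1 with hr | hr <;> rcases lt_or_gt_of_ne h2 with hi | hi
      · -- Q3
        exact ⟨1, Or.inl rfl, z, Or.inr ⟨hz, hr, hi⟩, by simp⟩
      · -- Q2: re<0, im>0, use y = z*I in Q3
        exact ⟨Complex.I, Or.inr rfl, z * Complex.I,
          Or.inr ⟨hI z hz, by rw [hzI.1]; linarith, by rw [hzI.2]; linarith⟩, hdivI⟩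
      · -- Q4: re>0, im<0, use y = z*I in Q1
        exact ⟨Complex.I, Or.inr rfl, z * Complex.I,
          Or.inl ⟨hI z hz, by rw [hzI.1]; linarith, by rw [hzI.2]; linarith⟩, hdivI⟩
      · -- Q1
        exact ⟨1, Or.inl rfl, z, Or.inl ⟨hz, hr, hi⟩, by simp⟩
end

section
/- Let Z be a set of complex numbers that is closed under multiplication by i, by −1, and by −i, and such that no element of Z is real or purely imaginary (in particular 0 ∉ Z, and for every real r, neither r nor r·i belongs to Z). Set X = {1, −1, i, −i} and Y = {z ∈ Z : Re z > 0 and Im z > 0}. Then (X, Y) is a uniquely factorable constellation pair and {y/x : x ∈ X, y ∈ Y} = Z. -/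
/-! Multiplication by a fourth root of unity permutes the four open quadrants, so each point
off the axes has exactly one rotation into the open first quadrant. Uniqueness gives the UFCP
property (if `x * y' = x' * y`, then `x' / x` rotates `y` into the first quadrant, so it is `1`);
existence, together with the closure of `Z` under these rotations, gives `{y / x} = Z`. -/

namespace Complex

def openFirstQuadrant : Set ℂ := {z | 0 < z.re ∧ 0 < z.im}

theorem mem_fourthRoots_iff {x : ℂ} : x ∈ ({1, -1, I, -I} : Set ℂ) ↔ x ^ 4 = 1 := by
  have hfactor : x ^ 4 - 1 = (x - 1) * (x + 1) * (x - I) * (x + I) := by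
    linear_combination (x ^ 2 - 1) * I_sq
  rw [← sub_eq_zero, hfactor]
  simp only [mul_eq_zero, sub_eq_zero, add_eq_zero_iff_eq_neg, Set.mem_insert_iff,
    Set.mem_singleton_iff, or_assoc]

theorem eq_one_of_pow_four_eq_one_of_mul_mem_openFirstQuadrant {u y : ℂ} (hu : u ^ 4 = 1)
    (hy : y ∈ openFirstQuadrant) (huy : u * y ∈ openFirstQuadrant) : u = 1 := by
  obtain ⟨hyre, hyim⟩ := hy
  obtain ⟨huyre, huyim⟩ := huy
  rcases mem_fourthRoots_iff.2 hu with rfl | rfl | rfl | rfl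
  · rfl
  · simp only [neg_mul, one_mul, neg_re] at huyre; linarith
  · simp only [mul_re, I_re, I_im] at huyre; linarith
  · simp only [mul_im, neg_re, neg_im, I_re, I_im] at huyim; linarith

theorem exists_pow_four_eq_one_mul_mem_openFirstQuadrant {z : ℂ} (hre : z.re ≠ 0)
    (him : z.im ≠ 0) : ∃ x : ℂ, x ^ 4 = 1 ∧ z * x ∈ openFirstQuadrant := by
  rcases hre.lt_or_gt with hre | hre <;> rcases him.lt_or_gt with him | him
  · exact ⟨-1, by norm_num, by simp [openFirstQuadrant, hre, him]⟩
  · exact ⟨-I, by rw [neg_pow, I_pow_four]; norm_num, by simp [openFirstQuadrant, hre, him]⟩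
  · exact ⟨I, I_pow_four, by simp [openFirstQuadrant, hre, him]⟩
  · exact ⟨1, one_pow 4, by simpa [openFirstQuadrant] using ⟨hre, him⟩⟩

theorem isUFCP_fourthRoots {Y : Set ℂ} (hY : Y ⊆ openFirstQuadrant) :
    IsUFCP {1, -1, I, -I} Y := by
  intro x hx x' hx' y hy y' hy' h
  rw [mem_fourthRoots_iff] at hx hx'
  have hx0 : x ≠ 0 := by rintro rfl; norm_num at hx
  have hu : (x' / x) ^ 4 = 1 := by rw [div_pow, hx, hx', div_one]
  have huy : x' / x * y = y' := by field_simp; linear_combination -h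
  have hu1 := eq_one_of_pow_four_eq_one_of_mul_mem_openFirstQuadrant hu (hY hy) (huy ▸ hY hy')
  rw [div_eq_one_iff_eq hx0] at hu1
  exact ⟨hu1.symm, by rwa [hu1, div_self hx0, one_mul] at huy⟩

end Complex

open Complex

/-- If `Z ⊆ ℂ` is closed under multiplication by `i`, `-1` and `-i`, and
contains no real and no purely imaginary number, then with
`X = {1, -1, i, -i}` and `Y` the points of `Z` in the open first quadrant,
`(X, Y)` is a UFCP and `{y/x : x ∈ X, y ∈ Y} = Z`. -/
theorem ufcp_of_rotation_invariant_four (Z : Set ℂ)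
    (hI : ∀ z ∈ Z, z * Complex.I ∈ Z)
    (hneg : ∀ z ∈ Z, z * (-1) ∈ Z)
    (hnegI : ∀ z ∈ Z, z * (-Complex.I) ∈ Z)
    (hreal : ∀ r : ℝ, (r : ℂ) ∉ Z ∧ (r : ℂ) * Complex.I ∉ Z) :
    IsUFCP ({1, -1, Complex.I, -Complex.I} : Set ℂ)
        {z ∈ Z | 0 < z.re ∧ 0 < z.im} ∧
      {w : ℂ | ∃ x ∈ ({1, -1, Complex.I, -Complex.I} : Set ℂ),
          ∃ y ∈ {z ∈ Z | 0 < z.re ∧ 0 < z.im}, w = y / x} = Z := by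
  have hrot : ∀ z ∈ Z, ∀ x : ℂ, x ^ 4 = 1 → z * x ∈ Z := by
    intro z hz x hx
    rcases mem_fourthRoots_iff.2 hx with rfl | rfl | rfl | rfl
    exacts [by rwa [mul_one], hneg z hz, hI z hz, hnegI z hz]
  refine ⟨isUFCP_fourthRoots fun y hy ↦ hy.2, Set.ext fun w ↦ ⟨?_, fun hw ↦ ?_⟩⟩
  · rintro ⟨x, hx, y, ⟨hyZ, -⟩, rfl⟩
    have hx_inv : x⁻¹ ^ 4 = 1 := by rw [inv_pow, mem_fourthRoots_iff.1 hx, inv_one]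
    exact div_eq_mul_inv y x ▸ hrot y hyZ x⁻¹ hx_inv
  · have hre : w.re ≠ 0 := fun h ↦
      (hreal w.im).2 (by rwa [← re_add_im w, h, ofReal_zero, zero_add] at hw)
    have him : w.im ≠ 0 := fun h ↦
      (hreal w.re).1 (by rwa [← re_add_im w, h, ofReal_zero, zero_mul, add_zero] at hw)
    obtain ⟨x, hx, hwx⟩ := exists_pow_four_eq_one_mul_mem_openFirstQuadrant hre him
    have hx0 : x ≠ 0 := by rintro rfl; norm_num at hx
    exact ⟨x, mem_fourthRoots_iff.2 hx, w * x, ⟨hrot w hw x hx, hwx⟩,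
      (mul_div_cancel_right₀ w hx0).symm⟩
end

section
/- Let K ≥ 2 be an even integer and let Q_K be the square 2^K-ary QAM constellation. Set X = {1, i} and Y = {(2^{K/2}−1−4m) + (2^{K/2}−1−4n)·i : m, n ∈ ℤ, 0 ≤ m, n ≤ 2^{(K−2)/2}−1} ∪ {(2^{K/2}−3−4m) + (2^{K/2}−3−4n)·i : m, n ∈ ℤ, 0 ≤ m, n ≤ 2^{(K−2)/2}−1}. Then (X, Y) is a uniquely factorable constellation pair, {y/x : x ∈ X, y ∈ Y} = Q_K, and the minimum of |y − y'| over all distinct y, y' ∈ Y equals 2√2. -/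
/-- The square `2^K`-ary QAM constellation (for even `K ≥ 2`). -/
def sqQAM (K : ℕ) : Set ℂ :=
  {z | ∃ m n : ℤ, -(2 : ℤ) ^ ((K - 2) / 2) + 1 ≤ m ∧ m ≤ (2 : ℤ) ^ ((K - 2) / 2) ∧
    -(2 : ℤ) ^ ((K - 2) / 2) + 1 ≤ n ∧ n ≤ (2 : ℤ) ^ ((K - 2) / 2) ∧
    z = (2 * (m : ℂ) - 1) + (2 * (n : ℂ) - 1) * Complex.I}

/-- The diagonal-lines sub-constellation of the square `2^K`-ary QAM
constellation, for even `K ≥ 2`. -/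
def diagY (K : ℕ) : Set ℂ :=
  {z | ∃ m n : ℤ, 0 ≤ m ∧ m ≤ (2 : ℤ) ^ ((K - 2) / 2) - 1 ∧
      0 ≤ n ∧ n ≤ (2 : ℤ) ^ ((K - 2) / 2) - 1 ∧
      z = ((2 : ℂ) ^ (K / 2) - 1 - 4 * (m : ℂ)) +
          ((2 : ℂ) ^ (K / 2) - 1 - 4 * (n : ℂ)) * Complex.I} ∪
  {z | ∃ m n : ℤ, 0 ≤ m ∧ m ≤ (2 : ℤ) ^ ((K - 2) / 2) - 1 ∧
      0 ≤ n ∧ n ≤ (2 : ℤ) ^ ((K - 2) / 2) - 1 ∧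
      z = ((2 : ℂ) ^ (K / 2) - 3 - 4 * (m : ℂ)) +
          ((2 : ℂ) ^ (K / 2) - 3 - 4 * (n : ℂ)) * Complex.I}

/-!
Write the points of `ℤ[i] ⊂ ℂ` as `a + b i`. The constellation `Q_K` consists of the points with
`a, b` odd and `|a|, |b| < 2^(K/2)`, and `Y` of those among them with `a ≡ b (mod 4)`. For odd
`a, b`, multiplication by `i`, `a + b i ↦ -b + a i`, swaps the classes `a ≡ b` and `a ≢ b (mod 4)`,
since `(a - b) + (a + b) = 2a ≢ 0 (mod 4)`. Hence `iY` is disjoint from `Y`, which gives unique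
factorability, and `Y ∪ Y / i = Q_K`. A difference of two distinct points of `Y` is `u + v i` with
`u, v` even, `u ≡ v (mod 4)` and not both zero, so `u² + v² ≥ 8`, with equality for `2 + 2i`.
-/

open Complex

lemma isUFCP_one_pair {u : ℂ} (hu : u ≠ 0) {Y : Set ℂ} (hY : ∀ y ∈ Y, u * y ∉ Y) :
    IsUFCP {1, u} Y := by
  rintro x (rfl | rfl) x' (rfl | rfl) y hy y' hy' h
  · simpa using h.symm
  · rw [one_mul] at h
    exact absurd (h ▸ hy') (hY y hy)
  · rw [one_mul] at h
    exact absurd (h ▸ hy) (hY y' hy')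
  · exact ⟨rfl, (mul_left_cancel₀ hu h).symm⟩

lemma setOf_div_mem_pair_eq_union (u : ℂ) (Y : Set ℂ) :
    {w : ℂ | ∃ x ∈ ({1, u} : Set ℂ), ∃ y ∈ Y, w = y / x} = Y ∪ (· / u) '' Y := by
  ext w
  simp [eq_comm]

lemma mul_self_le_mul_self_of_dvd {k u : ℤ} (hk : 0 ≤ k) (h : k ∣ u) (hu : u ≠ 0) :
    k * k ≤ u * u := by
  have : k ≤ |u| := Int.le_of_dvd (abs_pos.2 hu) ((dvd_abs k u).2 h)
  nlinarith [abs_mul_abs_self u]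

lemma eight_le_mul_self_add_mul_self {u v : ℤ} (hu : 2 ∣ u) (hv : 2 ∣ v) (huv : 4 ∣ u - v)
    (hne : u ≠ 0 ∨ v ≠ 0) : 8 ≤ u * u + v * v := by
  rcases eq_or_ne u 0 with rfl | hu₀
  · have := mul_self_le_mul_self_of_dvd (by norm_num) (by omega : 4 ∣ v)
      (hne.resolve_left (by simp))
    nlinarith
  rcases eq_or_ne v 0 with rfl | hv₀
  · have := mul_self_le_mul_self_of_dvd (by norm_num) (by omega : 4 ∣ u) hu₀
    nlinarith
  have := mul_self_le_mul_self_of_dvd (by norm_num) hu hu₀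
  have := mul_self_le_mul_self_of_dvd (by norm_num) hv hv₀
  linarith

namespace GaussianInt

def oddBox (N : ℤ) : Set GaussianInt :=
  {z | z.re % 2 = 1 ∧ z.im % 2 = 1 ∧ |z.re| < N ∧ |z.im| < N}

def diagBox (N : ℤ) : Set GaussianInt :=
  {z | z ∈ oddBox N ∧ 4 ∣ z.re - z.im}

lemma toComplex_sqrtd : ((Zsqrtd.sqrtd : GaussianInt) : ℂ) = I := by
  simp [toComplex_def]

lemma image_toComplex_div_I (S : Set GaussianInt) :
    (· / I) '' ((↑) '' S : Set ℂ) = (↑) '' ((-Zsqrtd.sqrtd * ·) '' S) := by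
  simp only [Set.image_image, toComplex_mul, toComplex_neg, toComplex_sqrtd, div_I, neg_mul,
    mul_comm]

lemma norm_toComplex (z : GaussianInt) : ‖(z : ℂ)‖ = √(z.norm : ℝ) := by
  rw [Complex.norm_def, intCast_real_norm]

lemma re_sqrtd_mul (z : GaussianInt) : (Zsqrtd.sqrtd * z).re = -z.im := by simp

lemma im_sqrtd_mul (z : GaussianInt) : (Zsqrtd.sqrtd * z).im = z.re := by simp

lemma sqrtd_mul_notMem_diagBox {N : ℤ} {z : GaussianInt} (hz : z ∈ diagBox N) :
    Zsqrtd.sqrtd * z ∉ diagBox N := by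
  obtain ⟨⟨hre, -, -, -⟩, hdvd⟩ := hz
  rintro ⟨-, hdvd'⟩
  rw [re_sqrtd_mul, im_sqrtd_mul] at hdvd'
  omega

lemma oddBox_eq_union (N : ℤ) :
    oddBox N = diagBox N ∪ (-Zsqrtd.sqrtd * ·) '' diagBox N := by
  ext z
  constructor
  · intro hz
    by_cases hdvd : 4 ∣ z.re - z.im
    · exact Or.inl ⟨hz, hdvd⟩
    · obtain ⟨hre, him, hreN, himN⟩ := hz
      refine Or.inr ⟨Zsqrtd.sqrtd * z, ⟨⟨?_, ?_, ?_, ?_⟩, ?_⟩, ?_⟩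
      all_goals simp only [re_sqrtd_mul, im_sqrtd_mul, abs_neg]
      · omega
      · exact hre
      · exact himN
      · exact hreN
      · omega
      · rw [neg_mul, ← mul_assoc, Zsqrtd.dmuld]
        simp
  · rintro (⟨hz, -⟩ | ⟨w, ⟨⟨hre, him, hreN, himN⟩, -⟩, rfl⟩)
    · exact hz
    · refine ⟨?_, ?_, ?_, ?_⟩
      all_goals simp only [neg_mul, Zsqrtd.re_neg, Zsqrtd.im_neg, re_sqrtd_mul, im_sqrtd_mul,
        neg_neg, abs_neg]
      exacts [him, by omega, himN, hreN]

lemma eight_le_norm_sub {N : ℤ} {z z' : GaussianInt} (hz : z ∈ diagBox N)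
    (hz' : z' ∈ diagBox N) (hne : z ≠ z') : 8 ≤ (z - z').norm := by
  obtain ⟨⟨hre, him, -, -⟩, hdvd⟩ := hz
  obtain ⟨⟨hre', him', -, -⟩, hdvd'⟩ := hz'
  rw [Zsqrtd.norm_def, Zsqrtd.re_sub, Zsqrtd.im_sub]
  have hne' : z.re - z'.re ≠ 0 ∨ z.im - z'.im ≠ 0 := by
    contrapose! hne
    exact Zsqrtd.ext (by omega) (by omega)
  linarith [eight_le_mul_self_add_mul_self (by omega : 2 ∣ z.re - z'.re)
    (by omega : 2 ∣ z.im - z'.im) (by omega) hne']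

lemma exists_ne_mem_diagBox_norm_sub_eq_eight {N : ℤ} (hN : 2 ≤ N) (hN₂ : 2 ∣ N) :
    ∃ z ∈ diagBox N, ∃ z' ∈ diagBox N, z ≠ z' ∧ (z - z').norm = 8 := by
  refine ⟨⟨N - 1, N - 1⟩, ⟨⟨?_, ?_, ?_, ?_⟩, by simp⟩, ⟨N - 3, N - 3⟩,
    ⟨⟨?_, ?_, ?_, ?_⟩, by simp⟩, by simp [Zsqrtd.ext_iff], by simp [Zsqrtd.norm_def]⟩
  all_goals dsimp only
  all_goals first | omega | (rw [abs_lt]; omega)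

end GaussianInt

open GaussianInt

lemma two_pow_half_eq {K : ℕ} (hK : 2 ≤ K) : (2 : ℤ) ^ (K / 2) = 2 * 2 ^ ((K - 2) / 2) := by
  rw [show K / 2 = (K - 2) / 2 + 1 by omega, pow_succ, mul_comm]

lemma sqQAM_eq_image {K : ℕ} (hK : 2 ≤ K) : sqQAM K = (↑) '' oddBox (2 ^ (K / 2)) := by
  rw [two_pow_half_eq hK]
  ext w
  simp only [sqQAM, oddBox, Set.mem_ofPred_eq, Set.mem_image, abs_lt]
  generalize (2 : ℤ) ^ ((K - 2) / 2) = M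
  constructor
  · rintro ⟨m, n, hm₁, hm₂, hn₁, hn₂, rfl⟩
    refine ⟨⟨2 * m - 1, 2 * n - 1⟩, ?_, by simp [toComplex_def']⟩
    dsimp only
    omega
  · rintro ⟨⟨a, b⟩, hab, rfl⟩
    dsimp only at hab
    obtain ⟨m, rfl⟩ : ∃ m, a = 2 * m - 1 := ⟨(a + 1) / 2, by omega⟩
    obtain ⟨n, rfl⟩ : ∃ n, b = 2 * n - 1 := ⟨(b + 1) / 2, by omega⟩
    exact ⟨m, n, by omega, by omega, by omega, by omega, by simp [toComplex_def']⟩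

lemma diagY_eq_image {K : ℕ} (hK : 2 ≤ K) : diagY K = (↑) '' diagBox (2 ^ (K / 2)) := by
  have h₁ : (2 : ℂ) ^ (K / 2) - 1 = ((2 ^ (K / 2) - 1 : ℤ) : ℂ) := by push_cast; rfl
  have h₃ : (2 : ℂ) ^ (K / 2) - 3 = ((2 ^ (K / 2) - 3 : ℤ) : ℂ) := by push_cast; rfl
  ext w
  simp only [diagY, diagBox, oddBox, h₁, h₃, two_pow_half_eq hK, Set.mem_union,
    Set.mem_ofPred_eq, Set.mem_image, abs_lt]
  generalize (2 : ℤ) ^ ((K - 2) / 2) = M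
  constructor
  · rintro (⟨m, n, hm₀, hm₁, hn₀, hn₁, rfl⟩ | ⟨m, n, hm₀, hm₁, hn₀, hn₁, rfl⟩)
    · refine ⟨⟨2 * M - 1 - 4 * m, 2 * M - 1 - 4 * n⟩, ?_, by simp [toComplex_def']⟩
      dsimp only
      omega
    · refine ⟨⟨2 * M - 3 - 4 * m, 2 * M - 3 - 4 * n⟩, ?_, by simp [toComplex_def']⟩
      dsimp only
      omega
  · rintro ⟨⟨a, b⟩, hab, rfl⟩
    dsimp only at hab
    rcases (by omega : 4 ∣ 2 * M - 1 - a ∨ 4 ∣ 2 * M - 3 - a) with ⟨m, hm⟩ | ⟨m, hm⟩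
    · obtain ⟨n, hn⟩ : 4 ∣ 2 * M - 1 - b := by omega
      obtain rfl : a = 2 * M - 1 - 4 * m := by omega
      obtain rfl : b = 2 * M - 1 - 4 * n := by omega
      exact Or.inl ⟨m, n, by omega, by omega, by omega, by omega, by simp [toComplex_def']⟩
    · obtain ⟨n, hn⟩ : 4 ∣ 2 * M - 3 - b := by omega
      obtain rfl : a = 2 * M - 3 - 4 * m := by omega
      obtain rfl : b = 2 * M - 3 - 4 * n := by omega
      exact Or.inr ⟨m, n, by omega, by omega, by omega, by omega, by simp [toComplex_def']⟩

theorem ufcp_sqQAM_two_general (K : ℕ) (hK2 : 2 ≤ K) :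
    IsUFCP ({1, Complex.I} : Set ℂ) (diagY K) ∧
    {w : ℂ | ∃ x ∈ ({1, Complex.I} : Set ℂ), ∃ y ∈ diagY K, w = y / x} = sqQAM K ∧
    (∀ y ∈ diagY K, ∀ y' ∈ diagY K, y ≠ y' →
        2 * Real.sqrt 2 ≤ ‖y - y'‖) ∧
    (∃ y ∈ diagY K, ∃ y' ∈ diagY K, y ≠ y' ∧
        ‖y - y'‖ = 2 * Real.sqrt 2) := by
  have hsqrt : 2 * √2 = √(8 : ℤ) := by
    rw [show ((8 : ℤ) : ℝ) = 2 ^ 2 * 2 by norm_num, Real.sqrt_mul' _ zero_le_two,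
      Real.sqrt_sq zero_le_two]
  rw [diagY_eq_image hK2, sqQAM_eq_image hK2, hsqrt]
  refine ⟨isUFCP_one_pair I_ne_zero ?_, ?_, ?_, ?_⟩
  · rintro _ ⟨z, hz, rfl⟩ ⟨z', hz', h⟩
    rw [← toComplex_sqrtd, ← toComplex_mul, toComplex_inj] at h
    exact sqrtd_mul_notMem_diagBox hz (h ▸ hz')
  · rw [setOf_div_mem_pair_eq_union, image_toComplex_div_I, ← Set.image_union, oddBox_eq_union]
  · rintro _ ⟨z, hz, rfl⟩ _ ⟨z', hz', rfl⟩ hne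
    rw [← toComplex_sub, norm_toComplex]
    exact Real.sqrt_le_sqrt (Int.cast_le.2 (eight_le_norm_sub hz hz' (ne_of_apply_ne _ hne)))
  · have hN : 2 ≤ (2 : ℤ) ^ (K / 2) := by
      rw [two_pow_half_eq hK2]
      linarith [one_le_pow₀ (M₀ := ℤ) (n := (K - 2) / 2) one_le_two]
    obtain ⟨z, hz, z', hz', hne, hnorm⟩ :=
      exists_ne_mem_diagBox_norm_sub_eq_eight hN ⟨_, two_pow_half_eq hK2⟩
    refine ⟨z, ⟨z, hz, rfl⟩, z', ⟨z', hz', rfl⟩, toComplex_injective.ne hne, ?_⟩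
    rw [← toComplex_sub, norm_toComplex, hnorm]

/-- With `X = {1, i}` and `Y` the diagonal-lines sub-constellation, `(X, Y)` is a
UFCP factorizing the square `2^K`-ary QAM constellation, and the minimum
distance between distinct points of `Y` is `2√2`. -/
theorem ufcp_sqQAM_two (K : ℕ) (hK2 : 2 ≤ K) (hKeven : K % 2 = 0) :
    IsUFCP ({1, Complex.I} : Set ℂ) (diagY K) ∧
    {w : ℂ | ∃ x ∈ ({1, Complex.I} : Set ℂ), ∃ y ∈ diagY K, w = y / x} = sqQAM K ∧
    (∀ y ∈ diagY K, ∀ y' ∈ diagY K, y ≠ y' →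
        2 * Real.sqrt 2 ≤ ‖y - y'‖) ∧
    (∃ y ∈ diagY K, ∃ y' ∈ diagY K, y ≠ y' ∧
        ‖y - y'‖ = 2 * Real.sqrt 2) :=
  ufcp_sqQAM_two_general K hK2
end

section
/- Let K ≥ 2 be an even integer and let Q_K be the square 2^K-ary QAM constellation. Suppose X ⊆ {1, −1, i, −i} with |X| = 2 and Y is a set of complex numbers such that (X, Y) is a uniquely factorable constellation pair and {y/x : x ∈ X, y ∈ Y} = Q_K. Then there exist distinct y, y' ∈ Y with |y − y'| ≤ 2√2. -/
open Set Complex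

theorem Set.nontrivial_of_subset_image2_of_ncard_lt {α β γ : Type*} {f : α → β → γ}
    {s : Set α} {t : Set β} {u : Set γ} (ht : t.Finite) (hu : u ⊆ image2 f s t)
    (hlt : t.ncard < u.ncard) : s.Nontrivial := by
  by_contra hs
  rcases (not_nontrivial_iff.mp hs).eq_empty_or_singleton with rfl | ⟨a, rfl⟩
  · simp_all
  · rw [image2_singleton_left] at hu
    have := (ncard_le_ncard hu (ht.image _)).trans (ncard_image_le ht)
    omega

def qpsk : Set ℂ := {1 + I, -1 + I, -1 - I, 1 - I}

theorem qpsk_subset_sqQAM (K : ℕ) : qpsk ⊆ sqQAM K := by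
  have hpow : (1 : ℤ) ≤ 2 ^ ((K - 2) / 2) := one_le_pow₀ (by norm_num)
  rintro p (rfl | rfl | rfl | rfl)
  · exact ⟨1, 1, by omega, by omega, by omega, by omega, by push_cast; ring⟩
  · exact ⟨0, 1, by omega, by omega, by omega, by omega, by push_cast; ring⟩
  · exact ⟨0, 0, by omega, by omega, by omega, by omega, by push_cast; ring⟩
  · exact ⟨1, 0, by omega, by omega, by omega, by omega, by push_cast; ring⟩

theorem ncard_qpsk : qpsk.ncard = 4 := by
  rw [qpsk, ncard_insert_of_notMem, ncard_insert_of_notMem, ncard_pair] <;>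
    norm_num [Complex.ext_iff]

theorem mul_mem_qpsk {p x : ℂ} (hp : p ∈ qpsk) (hx : x ∈ ({1, -1, I, -I} : Set ℂ)) :
    p * x ∈ qpsk := by
  rcases hx with rfl | rfl | rfl | rfl <;> rcases hp with rfl | rfl | rfl | rfl <;>
    simp [qpsk, Complex.ext_iff]

theorem norm_sub_le_of_mem_qpsk {a b : ℂ} (ha : a ∈ qpsk) (hb : b ∈ qpsk) :
    ‖a - b‖ ≤ 2 * √2 := by
  have hcoord : max |(a - b).re| |(a - b).im| ≤ 2 := by
    rcases ha with rfl | rfl | rfl | rfl <;> rcases hb with rfl | rfl | rfl | rfl <;>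
      norm_num [abs_le]
  calc ‖a - b‖ ≤ √2 * max |(a - b).re| |(a - b).im| := norm_le_sqrt_two_mul_max _
    _ ≤ √2 * 2 := by gcongr
    _ = 2 * √2 := mul_comm _ _

theorem qpsk_subset_image2_div_inter_qpsk {X Y : Set ℂ} (hX : X ⊆ ({1, -1, I, -I} : Set ℂ))
    (hY : qpsk ⊆ image2 (· / ·) Y X) : qpsk ⊆ image2 (· / ·) (Y ∩ qpsk) X := by
  intro p hp
  obtain ⟨y, hy, x, hx, rfl⟩ := hY hp
  have hx0 : x ≠ 0 := by
    rcases hX hx with rfl | rfl | rfl | rfl <;> simp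
  refine ⟨y, ⟨hy, ?_⟩, x, hx, rfl⟩
  simpa [hx0] using mul_mem_qpsk hp (hX hx)

theorem sqQAM_two_min_dist_upper_bound_general (K : ℕ)
    (X Y : Set ℂ) (hXsub : X ⊆ ({1, -1, Complex.I, -Complex.I} : Set ℂ))
    (hXcard : X.ncard = 2)
    (hfact : {w : ℂ | ∃ x ∈ X, ∃ y ∈ Y, w = y / x} = sqQAM K) :
    ∃ y ∈ Y, ∃ y' ∈ Y, y ≠ y' ∧ ‖y - y'‖ ≤ 2 * Real.sqrt 2 := by
  have hquot : qpsk ⊆ image2 (· / ·) Y X := by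
    intro p hp
    obtain ⟨x, hx, y, hy, rfl⟩ := hfact.symm.subset (qpsk_subset_sqQAM K hp)
    exact ⟨y, hy, x, hx, rfl⟩
  obtain ⟨y, ⟨hy, hyq⟩, y', ⟨hy', hy'q⟩, hne⟩ :=
    nontrivial_of_subset_image2_of_ncard_lt (finite_of_ncard_ne_zero (by omega))
      (qpsk_subset_image2_div_inter_qpsk hXsub hquot) (by rw [hXcard, ncard_qpsk]; omega)
  exact ⟨y, hy, y', hy', hne, norm_sub_le_of_mem_qpsk hyq hy'q⟩

/-- If `X ⊆ {1, -1, i, -i}` has two elements and `(X, Y)` is a UFCP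
factorizing the square `2^K`-ary QAM constellation (`K ≥ 2` even), then `Y`
contains two distinct points at distance at most `2√2`. -/
theorem sqQAM_two_min_dist_upper_bound (K : ℕ) (hK2 : 2 ≤ K) (hKeven : K % 2 = 0)
    (X Y : Set ℂ) (hXsub : X ⊆ ({1, -1, Complex.I, -Complex.I} : Set ℂ))
    (hXcard : X.ncard = 2) (hufcp : IsUFCP X Y)
    (hfact : {w : ℂ | ∃ x ∈ X, ∃ y ∈ Y, w = y / x} = sqQAM K) :
    ∃ y ∈ Y, ∃ y' ∈ Y, y ≠ y' ∧ ‖y - y'‖ ≤ 2 * Real.sqrt 2 :=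
  sqQAM_two_min_dist_upper_bound_general K X Y hXsub hXcard hfact
end

section
/- Let K ≥ 4 be an even integer and let Q_K be the square 2^K-ary QAM constellation. Suppose Y is a set of complex numbers such that, with X = {1, −1, i, −i}, the pair (X, Y) is a uniquely factorable constellation pair and {y/x : x ∈ X, y ∈ Y} = Q_K. Then there exist distinct y, y' ∈ Y with |y − y'| ≤ 4. -/
/-!
The points `1 + i`, `3 + i` and `1 + 3i` lie in `Q_K` once `K ≥ 4`, so `Y` contains rotations
`u₁(1 + i)`, `u₂(3 + i)`, `u₃(1 + 3i)` of them by fourth roots of unity. The first is within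
distance `4` of the second unless `u₂ = -u₁`, and of the third unless `u₃ = -u₁`; if both fail,
the last two differ by `-u₁(2 - 2i)`, of norm `2√2`.
-/

open Complex

lemma norm_le_four_of_normSq_le {z : ℂ} (h : normSq z ≤ 16) : ‖z‖ ≤ 4 := by
  rw [normSq_eq_norm_sq] at h
  nlinarith [norm_nonneg z]

lemma mem_sqQAM_of_mem_Icc {K : ℕ} (hK : 4 ≤ K) {m n : ℤ} (hm : m ∈ Set.Icc 1 2)
    (hn : n ∈ Set.Icc 1 2) : (2 * (m : ℂ) - 1) + (2 * (n : ℂ) - 1) * I ∈ sqQAM K := by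
  have h2 : (2 : ℤ) ≤ 2 ^ ((K - 2) / 2) := le_self_pow₀ one_le_two (by omega)
  exact ⟨m, n, by linarith [hm.1], by linarith [hm.2], by linarith [hn.1], by linarith [hn.2], rfl⟩

lemma exists_mul_mem_of_mem_div {X Y : Set ℂ} (hX : (0 : ℂ) ∉ X) {z : ℂ}
    (hz : z ∈ {w : ℂ | ∃ x ∈ X, ∃ y ∈ Y, w = y / x}) : ∃ x ∈ X, z * x ∈ Y := by
  obtain ⟨x, hx, y, hy, rfl⟩ := hz
  exact ⟨x, hx, by rwa [div_mul_cancel₀ y (ne_of_mem_of_not_mem hx hX)]⟩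

lemma zero_notMem_fourthRoots : (0 : ℂ) ∉ ({1, -1, I, -I} : Set ℂ) := by
  simp [I_ne_zero, eq_comm]

lemma ne_and_norm_sub_le_four_of_ne_neg {u v : ℂ} (hu : u ∈ ({1, -1, I, -I} : Set ℂ))
    (hv : v ∈ ({1, -1, I, -I} : Set ℂ)) (huv : v ≠ -u) {b : ℂ} (hb : b = 3 + I ∨ b = 1 + 3 * I) :
    (1 + I) * u ≠ b * v ∧ ‖(1 + I) * u - b * v‖ ≤ 4 := by
  simp only [Set.mem_insert_iff, Set.mem_singleton_iff] at hu hv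
  rcases hb with rfl | rfl <;> rcases hu with rfl | rfl | rfl | rfl <;>
    rcases hv with rfl | rfl | rfl | rfl <;>
    first
    | exact (huv rfl).elim
    | exact (huv (neg_neg _).symm).elim
    | exact ⟨by norm_num [Complex.ext_iff], norm_le_four_of_normSq_le (by norm_num [normSq_apply])⟩

lemma ne_and_norm_sub_le_four_of_eq {u : ℂ} (hu : u ∈ ({1, -1, I, -I} : Set ℂ)) :
    (3 + I) * u ≠ (1 + 3 * I) * u ∧ ‖(3 + I) * u - (1 + 3 * I) * u‖ ≤ 4 := by
  simp only [Set.mem_insert_iff, Set.mem_singleton_iff] at hu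
  rcases hu with rfl | rfl | rfl | rfl <;>
    exact ⟨by norm_num [Complex.ext_iff], norm_le_four_of_normSq_le (by norm_num [normSq_apply])⟩

theorem sqQAM_four_min_dist_upper_bound_general (K : ℕ) (hK4 : 4 ≤ K)
    (Y : Set ℂ)
    (hfact : {w : ℂ | ∃ x ∈ ({1, -1, Complex.I, -Complex.I} : Set ℂ),
        ∃ y ∈ Y, w = y / x} = sqQAM K) :
    ∃ y ∈ Y, ∃ y' ∈ Y, y ≠ y' ∧ ‖y - y'‖ ≤ 4 := by
  have hrotate (m n : ℤ) (hm : m ∈ Set.Icc 1 2) (hn : n ∈ Set.Icc 1 2) :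
      ∃ u ∈ ({1, -1, I, -I} : Set ℂ), ((2 * (m : ℂ) - 1) + (2 * (n : ℂ) - 1) * I) * u ∈ Y :=
    exists_mul_mem_of_mem_div zero_notMem_fourthRoots (hfact ▸ mem_sqQAM_of_mem_Icc hK4 hm hn)
  obtain ⟨u₁, hu₁, hy₁⟩ := hrotate 1 1 (by norm_num) (by norm_num)
  obtain ⟨u₂, hu₂, hy₂⟩ := hrotate 2 1 (by norm_num) (by norm_num)
  obtain ⟨u₃, hu₃, hy₃⟩ := hrotate 1 2 (by norm_num) (by norm_num)
  norm_num at hy₁ hy₂ hy₃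
  by_cases h₂ : u₂ = -u₁
  · by_cases h₃ : u₃ = -u₁
    · rw [h₃, ← h₂] at hy₃
      exact ⟨_, hy₂, _, hy₃, ne_and_norm_sub_le_four_of_eq hu₂⟩
    · exact ⟨_, hy₁, _, hy₃, ne_and_norm_sub_le_four_of_ne_neg hu₁ hu₃ h₃ (Or.inr rfl)⟩
  · exact ⟨_, hy₁, _, hy₂, ne_and_norm_sub_le_four_of_ne_neg hu₁ hu₂ h₂ (Or.inl rfl)⟩

/-- If `(X, Y)` with `X = {1, -1, i, -i}` is a UFCP factorizing the square
`2^K`-ary QAM constellation (`K ≥ 4` even), then `Y` contains two distinct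
points at distance at most `4`. -/
theorem sqQAM_four_min_dist_upper_bound (K : ℕ) (hK4 : 4 ≤ K) (hKeven : K % 2 = 0)
    (Y : Set ℂ)
    (hufcp : IsUFCP ({1, -1, Complex.I, -Complex.I} : Set ℂ) Y)
    (hfact : {w : ℂ | ∃ x ∈ ({1, -1, Complex.I, -Complex.I} : Set ℂ),
        ∃ y ∈ Y, w = y / x} = sqQAM K) :
    ∃ y ∈ Y, ∃ y' ∈ Y, y ≠ y' ∧ ‖y - y'‖ ≤ 4 :=
  sqQAM_four_min_dist_upper_bound_general K hK4 Y hfact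
end

section
/- Let X, Y1, Y2 be sets of complex numbers with |Y1| ≥ 2 and |Y2| ≥ 2 such that (X, Y1) and (X, Y2) are uniquely factorable constellation pairs. Suppose x, x̂ ∈ X, y1, ŷ1 ∈ Y1, y2, ŷ2 ∈ Y2 and h, ĥ ∈ ℂ² satisfy U(x, y1, y2)·h = U(x̂, ŷ1, ŷ2)·ĥ and this common vector in ℂ⁴ is nonzero. Then x = x̂, y1 = ŷ1, y2 = ŷ2, and h = ĥ. (Unique identification of both the channel coefficients and the transmitted signals in the noise-free case.) -/
/-- The normalized `4 × 2` unitary UFCP space-time codeword matrix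
`U(x, y₁, y₂)`. -/
noncomputable def Umat (x y1 y2 : ℂ) : Matrix (Fin 4) (Fin 2) ℂ :=
  (((Real.sqrt (‖x‖ ^ 2 + ‖y1‖ ^ 2 + ‖y2‖ ^ 2))⁻¹ : ℝ) : ℂ) •
    !![x, 0; 0, starRingEnd ℂ x; y1, y2; -(starRingEnd ℂ y2), starRingEnd ℂ y1]

/-!
Write `U(x, y₁, y₂) h = c · (u, v, p u + q v, -q̄ u + p̄ v)` with `u = x h₁`, `v = x̄ h₂`,
`p = y₁ / x`, `q = y₂ / x̄` and `c > 0` the normalization; this needs `x ≠ 0`, which the UFCP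
property forces as soon as `|Y₁| ≥ 2`. The first two entries determine `(c u, c v)`, and the
last two are the Alamouti matrix `[[p, q], [-q̄, p̄]]` applied to it. Its determinant
`|p|² + |q|²` vanishes only at `p = q = 0`, so a nonzero received vector determines `p` and `q`.
Then `y₁ / x = ŷ₁ / x̂` is a factorization equation for the UFCP `(X, Y₁)`, giving `x = x̂` and
`y₁ = ŷ₁`, after which `y₂ = ŷ₂` and `h = ĥ` follow by cancellation.
-/

open ComplexConjugate Matrix

lemma IsUFCP.ne_zero {X Y : Set ℂ} (hU : IsUFCP X Y) (hY : Y.Nontrivial) {x : ℂ}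
    (hx : x ∈ X) : x ≠ 0 := by
  rintro rfl
  obtain ⟨y, hy, y', hy', hne⟩ := hY
  exact hne (hU 0 hx 0 hx y' hy' y hy (by ring)).2.symm

lemma alamouti_eq_zero_of_mulVec_eq_zero {d e u v : ℂ} (h₁ : d * u + e * v = 0)
    (h₂ : -conj e * u + conj d * v = 0) (huv : u ≠ 0 ∨ v ≠ 0) : d = 0 ∧ e = 0 := by
  have hu : ((Complex.normSq d + Complex.normSq e : ℝ) : ℂ) * u = 0 := by
    push_cast
    rw [← Complex.mul_conj, ← Complex.mul_conj]
    linear_combination conj d * h₁ - e * h₂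
  have hv : ((Complex.normSq d + Complex.normSq e : ℝ) : ℂ) * v = 0 := by
    push_cast
    rw [← Complex.mul_conj, ← Complex.mul_conj]
    linear_combination conj e * h₁ + d * h₂
  have hdet : Complex.normSq d + Complex.normSq e = 0 := by
    rcases huv with hu0 | hv0
    · exact_mod_cast (mul_eq_zero.mp hu).resolve_right hu0
    · exact_mod_cast (mul_eq_zero.mp hv).resolve_right hv0
  rw [add_eq_zero_iff_of_nonneg (Complex.normSq_nonneg d) (Complex.normSq_nonneg e)] at hdet
  exact ⟨Complex.normSq_eq_zero.mp hdet.1, Complex.normSq_eq_zero.mp hdet.2⟩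

def alamoutiVec (p q u v : ℂ) : Fin 4 → ℂ :=
  ![u, v, p * u + q * v, -conj q * u + conj p * v]

lemma alamoutiVec_inj {p q u v p' q' u' v' : ℂ} (hne : alamoutiVec p q u v ≠ 0)
    (heq : alamoutiVec p q u v = alamoutiVec p' q' u' v') :
    p = p' ∧ q = q' ∧ u = u' ∧ v = v' := by
  have hu : u = u' := congrFun heq 0
  have hv : v = v' := congrFun heq 1
  subst hu hv
  have huv : u ≠ 0 ∨ v ≠ 0 := by
    by_contra! h
    exact hne (by simp [alamoutiVec, h.1, h.2])
  have h₂ : (p - p') * u + (q - q') * v = 0 := by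
    have := congrFun heq 2
    simp only [alamoutiVec, cons_val] at this
    linear_combination this
  have h₃ : -conj (q - q') * u + conj (p - p') * v = 0 := by
    have := congrFun heq 3
    simp only [alamoutiVec, cons_val] at this
    rw [map_sub, map_sub]
    linear_combination this
  obtain ⟨hp, hq⟩ := alamouti_eq_zero_of_mulVec_eq_zero h₂ h₃ huv
  exact ⟨sub_eq_zero.mp hp, sub_eq_zero.mp hq, rfl, rfl⟩

noncomputable def umatScale (x y1 y2 : ℂ) : ℂ :=
  ((Real.sqrt (‖x‖ ^ 2 + ‖y1‖ ^ 2 + ‖y2‖ ^ 2))⁻¹ : ℝ)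

lemma umatScale_ne_zero {x : ℂ} (y1 y2 : ℂ) (hx : x ≠ 0) : umatScale x y1 y2 ≠ 0 := by
  have hpos : 0 < ‖x‖ ^ 2 + ‖y1‖ ^ 2 + ‖y2‖ ^ 2 := by
    have : 0 < ‖x‖ := norm_pos_iff.mpr hx
    positivity
  unfold umatScale
  exact_mod_cast (inv_pos.mpr (Real.sqrt_pos.mpr hpos)).ne'

lemma Umat_mulVec {x : ℂ} (y1 y2 : ℂ) (hx : x ≠ 0) (h : Fin 2 → ℂ) :
    Umat x y1 y2 *ᵥ h = alamoutiVec (y1 / x) (y2 / conj x)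
      (umatScale x y1 y2 * x * h 0) (umatScale x y1 y2 * conj x * h 1) := by
  have hcx : conj x ≠ 0 := (map_ne_zero _).mpr hx
  ext i
  fin_cases i <;>
    simp only [Umat, umatScale, alamoutiVec, mulVec, dotProduct, Fin.sum_univ_two, Fin.isValue,
      Fin.zero_eta, Fin.mk_one, Fin.reduceFinMk, Matrix.smul_apply, of_apply, cons_val',
      cons_val_fin_one, cons_val, cons_val_zero, cons_val_one, smul_eq_mul, mul_zero, zero_mul,
      add_zero, zero_add, map_div₀, Complex.conj_conj] <;>
    field_simp

theorem ufcp_unique_identification_general (X Y1 : Set ℂ)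
    (hY1 : Y1.Nontrivial)
    (h1 : IsUFCP X Y1)
    (x x' y1 y1' y2 y2' : ℂ)
    (hx : x ∈ X) (hx' : x' ∈ X) (hy1 : y1 ∈ Y1) (hy1' : y1' ∈ Y1)
    (h hhat : Fin 2 → ℂ)
    (heq : Matrix.mulVec (Umat x y1 y2) h = Matrix.mulVec (Umat x' y1' y2') hhat)
    (hne : Matrix.mulVec (Umat x y1 y2) h ≠ 0) :
    x = x' ∧ y1 = y1' ∧ y2 = y2' ∧ h = hhat := by
  have hx0 := h1.ne_zero hY1 hx
  have hx0' := h1.ne_zero hY1 hx'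
  rw [Umat_mulVec y1 y2 hx0] at heq hne
  rw [Umat_mulVec y1' y2' hx0'] at heq
  obtain ⟨hp, hq, hu, hv⟩ := alamoutiVec_inj hne heq
  rw [div_eq_div_iff hx0 hx0'] at hp
  obtain ⟨rfl, rfl⟩ := h1 x hx x' hx' y1 hy1 y1' hy1' (by linear_combination -hp)
  obtain rfl : y2 = y2' := (div_left_inj' ((map_ne_zero _).mpr hx0)).mp hq
  have hc := umatScale_ne_zero y1 y2 hx0
  refine ⟨rfl, rfl, rfl, funext fun i => ?_⟩
  fin_cases i
  · exact mul_left_cancel₀ (mul_ne_zero hc hx0) hu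
  · exact mul_left_cancel₀ (mul_ne_zero hc ((map_ne_zero _).mpr hx0)) hv

/-- Unique identification of the channel coefficients and the transmitted
signals in the noise-free case: if `U(x, y₁, y₂) h = U(x̂, ŷ₁, ŷ₂) ĥ ≠ 0`,
then the signals and the channel coincide. -/
theorem ufcp_unique_identification (X Y1 Y2 : Set ℂ)
    (hY1 : Y1.Nontrivial) (hY2 : Y2.Nontrivial)
    (h1 : IsUFCP X Y1) (h2 : IsUFCP X Y2)
    (x x' y1 y1' y2 y2' : ℂ)
    (hx : x ∈ X) (hx' : x' ∈ X) (hy1 : y1 ∈ Y1) (hy1' : y1' ∈ Y1)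
    (hy2 : y2 ∈ Y2) (hy2' : y2' ∈ Y2)
    (h hhat : Fin 2 → ℂ)
    (heq : Matrix.mulVec (Umat x y1 y2) h = Matrix.mulVec (Umat x' y1' y2') hhat)
    (hne : Matrix.mulVec (Umat x y1 y2) h ≠ 0) :
    x = x' ∧ y1 = y1' ∧ y2 = y2' ∧ h = hhat :=
  ufcp_unique_identification_general X Y1 hY1 h1 x x' y1 y1' y2 y2' hx hx' hy1 hy1' h hhat heq hne
end
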